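/- arXiv:1902.10276 — 3 statements merged into one kernel-verified Lean document; each statement's English description precedes it below -/
import Mathlib

section
/- Let n ≥ 1 and let 𝒥 ∈ Mₙ(ℂ) be a fixed matrix. Let ξ₁, G : ℝ → instances of Mₙ(ℂ) be differentiable matrix-valued functions such that ξ₁(x) and G(x) are invertible for every x, and suppose G satisfies the linear equation i·G′(x) = G(x)·𝒥 − 𝒥·G(x) for all x. Set ξ₂(x) := ξ₁(x)·G(x). Then for every x ∈ ℝ, i·ξ₂′(x)·ξ₂(x)⁻¹ − ξ₂(x)·𝒥·ξ₂(x)⁻¹ = i·ξ₁′(x)·ξ₁(x)⁻¹ − ξ₁(x)·𝒥·ξ₁(x)⁻¹. In other words, the quantity g(x) = i ξ′ξ⁻¹ − ξ𝒥ξ⁻¹ built from a solution of the Riemann–Hilbert problem is the same on both sides of the contour, so it defines a single Lax potential (Zakharov–Shabat equivalence of the RHP with a Lax representation). -/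
attribute [local instance] Matrix.normedAddCommGroup Matrix.normedSpace

section Derivative

variable {𝕜 𝔸 : Type*} [NontriviallyNormedField 𝕜] [CompleteSpace 𝕜] [NormedRing 𝔸]
  [NormedAlgebra 𝕜 𝔸] [FiniteDimensional 𝕜 𝔸] {l m n : Type*} [Fintype l] [Fintype m]
  [Fintype n]

/-- The entrywise sup norm on matrices is not submultiplicative, so `HasDerivAt.mul` does not
apply; matrix multiplication is still a continuous bilinear map by finite dimensionality. -/
theorem HasDerivAt.matrix_mul {A : 𝕜 → Matrix l m 𝔸} {B : 𝕜 → Matrix m n 𝔸}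
    {A' : Matrix l m 𝔸} {B' : Matrix m n 𝔸} {x : 𝕜}
    (hA : HasDerivAt A A' x) (hB : HasDerivAt B B' x) :
    HasDerivAt (fun y => A y * B y) (A' * B x + A x * B') x := by
  rw [add_comm]
  exact (mulLinearMap 𝕜).toContinuousBilinearMap.hasDerivAt_of_bilinear (fun _ => hA) fun _ => hB

end Derivative

/-- `ξ'` stands for the derivative of `ξ`; the paper takes `c = i`. -/
noncomputable def laxPotential {n α : Type*} [Fintype n] [DecidableEq n] [CommRing α] (c : α)
    (𝒥 ξ ξ' : Matrix n n α) : Matrix n n α :=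
  c • ξ' * ξ⁻¹ - ξ * 𝒥 * ξ⁻¹

/-- The commutator `G 𝒥 − 𝒥 G` coming from `c G′` cancels the conjugation of `𝒥` by `G`. -/
theorem laxPotential_mul_right {n α : Type*} [Fintype n] [DecidableEq n] [CommRing α]
    (c : α) (𝒥 ξ ξ' G G' : Matrix n n α) (hG : G * G⁻¹ = 1) (hG' : c • G' = G * 𝒥 - 𝒥 * G) :
    laxPotential c 𝒥 (ξ * G) (ξ' * G + ξ * G') = laxPotential c 𝒥 ξ ξ' := by
  have hcancel : ∀ M : Matrix n n α, G * (G⁻¹ * M) = M := fun M => by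
    rw [← Matrix.mul_assoc, hG, Matrix.one_mul]
  have hderiv : c • (ξ' * G + ξ * G') = c • ξ' * G + ξ * (G * 𝒥 - 𝒥 * G) := by
    rw [smul_add, ← smul_mul_assoc, ← mul_smul_comm, hG']
  simp only [laxPotential, hderiv, Matrix.mul_inv_rev, mul_sub, sub_mul, add_mul, Matrix.mul_assoc,
    hcancel]
  abel

theorem rhp_lax_potential_general (n : ℕ)
    (𝒥 : Matrix (Fin n) (Fin n) ℂ)
    (ξ₁ G ξ₂ : ℝ → Matrix (Fin n) (Fin n) ℂ)
    (hξ₁ : Differentiable ℝ ξ₁) (hG : Differentiable ℝ G)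
    (hGinv : ∀ x : ℝ, IsUnit (G x))
    (hGeq : ∀ x : ℝ, Complex.I • deriv G x = G x * 𝒥 - 𝒥 * G x)
    (hξ₂ : ∀ x : ℝ, ξ₂ x = ξ₁ x * G x) :
    ∀ x : ℝ,
      Complex.I • deriv ξ₂ x * (ξ₂ x)⁻¹ - ξ₂ x * 𝒥 * (ξ₂ x)⁻¹ =
        Complex.I • deriv ξ₁ x * (ξ₁ x)⁻¹ - ξ₁ x * 𝒥 * (ξ₁ x)⁻¹ := by
  intro x
  obtain rfl : ξ₂ = fun y => ξ₁ y * G y := funext hξ₂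
  have hderiv : deriv (fun y => ξ₁ y * G y) x = deriv ξ₁ x * G x + ξ₁ x * deriv G x :=
    ((hξ₁ x).hasDerivAt.matrix_mul (hG x).hasDerivAt).deriv
  have hGG : G x * (G x)⁻¹ = 1 :=
    Matrix.mul_nonsing_inv _ ((Matrix.isUnit_iff_isUnit_det _).mp (hGinv x))
  simpa only [laxPotential, hderiv] using
    laxPotential_mul_right Complex.I 𝒥 (ξ₁ x) (deriv ξ₁ x) (G x) (deriv G x) hGG (hGeq x)

/-- Zakharov–Shabat equivalence of the RHP with a Lax representation: if
`ξ₂ = ξ₁·G` where the sewing matrix `G` satisfies `i G′ = G𝒥 − 𝒥G`, then the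
quantity `g = i ξ′ ξ⁻¹ − ξ 𝒥 ξ⁻¹` is the same for `ξ₁` and `ξ₂`. -/
theorem rhp_lax_potential (n : ℕ) (hn : 1 ≤ n)
    (𝒥 : Matrix (Fin n) (Fin n) ℂ)
    (ξ₁ G ξ₂ : ℝ → Matrix (Fin n) (Fin n) ℂ)
    (hξ₁ : Differentiable ℝ ξ₁) (hG : Differentiable ℝ G)
    (hξ₁inv : ∀ x : ℝ, IsUnit (ξ₁ x)) (hGinv : ∀ x : ℝ, IsUnit (G x))
    (hGeq : ∀ x : ℝ, Complex.I • deriv G x = G x * 𝒥 - 𝒥 * G x)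
    (hξ₂ : ∀ x : ℝ, ξ₂ x = ξ₁ x * G x) :
    ∀ x : ℝ,
      Complex.I • deriv ξ₂ x * (ξ₂ x)⁻¹ - ξ₂ x * 𝒥 * (ξ₂ x)⁻¹ =
        Complex.I • deriv ξ₁ x * (ξ₁ x)⁻¹ - ξ₁ x * 𝒥 * (ξ₁ x)⁻¹ :=
  rhp_lax_potential_general n 𝒥 ξ₁ G ξ₂ hξ₁ hG hGinv hGeq hξ₂
end

section
/- For real parameters θ and α, let U(θ, α) be the 2×2 complex matrix with rows (e^{iα}cosθ, i·sinθ) and (i·sinθ, e^{−iα}cosθ), and let A(θ, α) be the 3×3 real matrix with rows (−sin²θ − cos²θ·cos2α, cos²θ·sin2α, −sin2θ·sinα), (cos²θ·sin2α, cos²θ·cos2α − sin²θ, −sin2θ·cosα), (−sin2θ·sinα, −sin2θ·cosα, −cos2θ). Then det U(θ,α) = 1 (so U is invertible), and for every s ∈ ℝ³, −U(θ,α)·M(s)ᵀ·U(θ,α)⁻¹ = M(A(θ,α)·s), where A(θ,α)·s is the matrix-vector product. That is, under the parametrization S = M(s), the involution S̃ = −USᵀU⁻¹ acts on the vector s as the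 linear map A(θ,α). -/
open Matrix

/-- The Hermitian traceless `2×2` matrix associated with a vector
`s = (s₁,s₂,s₃) ∈ ℝ³`. -/
noncomputable def pauliM (s : Fin 3 → ℝ) : Matrix (Fin 2) (Fin 2) ℂ :=
  !![(s 2 : ℂ), (s 0 : ℂ) - Complex.I * (s 1 : ℂ);
     (s 0 : ℂ) + Complex.I * (s 1 : ℂ), -(s 2 : ℂ)]

/-- The matrix `U(θ,α)` implementing the involution `S ↦ −USᵀU⁻¹`. -/
noncomputable def ferroU (θ α : ℝ) : Matrix (Fin 2) (Fin 2) ℂ :=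
  !![Complex.exp (Complex.I * α) * Real.cos θ, Complex.I * Real.sin θ;
     Complex.I * Real.sin θ, Complex.exp (-(Complex.I * α)) * Real.cos θ]

/-- The `3×3` real matrix `A(θ,α)` induced on `ℝ³` by the involution
`S ↦ −USᵀU⁻¹` on `su(2)`. -/
noncomputable def ferroA (θ α : ℝ) : Matrix (Fin 3) (Fin 3) ℝ :=
  !![-Real.sin θ ^ 2 - Real.cos θ ^ 2 * Real.cos (2 * α),
       Real.cos θ ^ 2 * Real.sin (2 * α),
       -Real.sin (2 * θ) * Real.sin α;
     Real.cos θ ^ 2 * Real.sin (2 * α),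
       Real.cos θ ^ 2 * Real.cos (2 * α) - Real.sin θ ^ 2,
       -Real.sin (2 * θ) * Real.cos α;
     -Real.sin (2 * θ) * Real.sin α,
       -Real.sin (2 * θ) * Real.cos α,
       -Real.cos (2 * θ)]

set_option maxHeartbeats 1000000

/-- `det U(θ,α) = 1`, and under the parametrization `S = M(s)` the involution
`S̃ = −USᵀU⁻¹` acts on the vector `s ∈ ℝ³` as the linear map `A(θ,α)`. -/
theorem involution_acts_as_ferroA (θ α : ℝ) :
    (ferroU θ α).det = 1 ∧
      ∀ s : Fin 3 → ℝ,
        -(ferroU θ α * (pauliM s)ᵀ * (ferroU θ α)⁻¹) =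
          pauliM ((ferroA θ α).mulVec s) := by
  have hdet : (ferroU θ α).det = 1 := by
    rw [show (ferroU θ α) = !![Complex.exp (Complex.I * α) * Real.cos θ, Complex.I * Real.sin θ;
      Complex.I * Real.sin θ, Complex.exp (-(Complex.I * α)) * Real.cos θ] from rfl,
      Matrix.det_fin_two_of]
    rw [mul_comm Complex.I (α:ℂ)]
    rw [show -((α:ℂ) * Complex.I) = (-α : ℝ) * Complex.I by push_cast; ring]
    rw [Complex.exp_mul_I, Complex.exp_mul_I]
    simp [← Complex.ofReal_cos, ← Complex.ofReal_sin, Complex.ext_iff]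
    constructor <;> nlinarith [Real.sin_sq_add_cos_sq θ, Real.sin_sq_add_cos_sq α]
  refine ⟨hdet, fun s => ?_⟩
  have hinv : (ferroU θ α)⁻¹ = (ferroU θ α).adjugate := by
    rw [Matrix.inv_def, hdet]; simp
  have he1 : Complex.exp (Complex.I * α) = (Real.cos α : ℂ) + (Real.sin α : ℂ) * Complex.I := by
    rw [mul_comm, Complex.exp_mul_I, ← Complex.ofReal_cos, ← Complex.ofReal_sin]
  have he2 : Complex.exp (-(Complex.I * α)) = (Real.cos α : ℂ) - (Real.sin α : ℂ) * Complex.I := by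
    rw [show -(Complex.I * α) = (-α : ℝ) * Complex.I by push_cast; ring, Complex.exp_mul_I]
    push_cast
    rw [Complex.cos_neg, Complex.sin_neg]
    ring
  have hT : (pauliM s)ᵀ = !![(s 2 : ℂ), (s 0 : ℂ) + Complex.I * (s 1 : ℂ);
      (s 0 : ℂ) - Complex.I * (s 1 : ℂ), -(s 2 : ℂ)] := by
    ext i j; fin_cases i <;> fin_cases j <;> simp [pauliM]
  rw [hinv, hT]

  have hadj : (ferroU θ α).adjugate =
      !![Complex.exp (-(Complex.I * α)) * Real.cos θ, -(Complex.I * Real.sin θ);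
         -(Complex.I * Real.sin θ), Complex.exp (Complex.I * α) * Real.cos θ] := by
    rw [show (ferroU θ α) = !![Complex.exp (Complex.I * α) * Real.cos θ, Complex.I * Real.sin θ;
      Complex.I * Real.sin θ, Complex.exp (-(Complex.I * α)) * Real.cos θ] from rfl,
      Matrix.adjugate_fin_two_of]
  rw [hadj]

  have hmv : (ferroA θ α).mulVec s = ![
      (-Real.sin θ ^ 2 - Real.cos θ ^ 2 * Real.cos (2 * α)) * s 0
        + Real.cos θ ^ 2 * Real.sin (2 * α) * s 1 + (-Real.sin (2 * θ) * Real.sin α) * s 2,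
      Real.cos θ ^ 2 * Real.sin (2 * α) * s 0
        + (Real.cos θ ^ 2 * Real.cos (2 * α) - Real.sin θ ^ 2) * s 1
        + (-Real.sin (2 * θ) * Real.cos α) * s 2,
      (-Real.sin (2 * θ) * Real.sin α) * s 0 + (-Real.sin (2 * θ) * Real.cos α) * s 1
        + (-Real.cos (2 * θ)) * s 2] := by
    ext i; fin_cases i <;>
      simp [ferroA, Matrix.mulVec, dotProduct, Fin.sum_univ_three] <;> ring
  rw [hmv]
  show -(!![_,_;_,_] * !![_,_;_,_] * !![_,_;_,_]) = _
  rw [Matrix.mul_fin_two, Matrix.mul_fin_two]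
  ext i j
  fin_cases i <;> fin_cases j <;>
    simp [ferroU, pauliM, he1, he2, Real.sin_two_mul, Real.cos_two_mul',
      Complex.ext_iff, Complex.cos_ofReal_re, Complex.sin_ofReal_re,
      Complex.cos_ofReal_im, Complex.sin_ofReal_im, pow_two] <;>
    constructor <;>
    first
      | trivial
      | linear_combination (Real.cos θ ^ 2 * s 0) * Real.sin_sq_add_cos_sq α
      | linear_combination (-(Real.cos θ ^ 2 * s 0)) * Real.sin_sq_add_cos_sq α
      | linear_combination (Real.cos θ ^ 2 * s 1) * Real.sin_sq_add_cos_sq α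
      | linear_combination (-(Real.cos θ ^ 2 * s 1)) * Real.sin_sq_add_cos_sq α
      | linear_combination (Real.cos θ ^ 2 * s 2) * Real.sin_sq_add_cos_sq α
      | linear_combination (-(Real.cos θ ^ 2 * s 2)) * Real.sin_sq_add_cos_sq α
      | ring
end

section
/- Let A be a constant symmetric 3×3 real matrix, let S : ℝ → ℝ³ be differentiable, set S̃(x) := A·S(x) (matrix-vector product) and F(x) := (1/2)·⟨S(x), S̃(x)⟩ (half the Euclidean inner product). Then for every x, S̃ × (S × S′) + S × (S̃ × S̃′) = F′·(S + S̃) − 2F·(S + S̃)′, where × is the standard cross product on ℝ³ and ′ is the derivative in x. (This identity shows that the nonlocal term M₀ of the deformed Heisenberg ferromagnet model is a total x-derivative combination.) -/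
/-!
Expanding both double cross products by `a × (b × c) = ⟨a, c⟩ b - ⟨a, b⟩ c` turns the left-hand
side into `⟨S̃, S′⟩ S + ⟨S, S̃′⟩ S̃ - ⟨S, S̃⟩ (S′ + S̃′)`. Since `A` is symmetric, both coefficients
`⟨A S, S′⟩` and `⟨S, A S′⟩` equal `F′`, while `⟨S, S̃⟩ = 2F`.
-/

open Matrix

theorem Matrix.IsSymm.dotProduct_mulVec_comm {n R : Type*} [Fintype n] [CommSemiring R]
    {A : Matrix n n R} (hA : A.IsSymm) (v w : n → R) : v ⬝ᵥ A *ᵥ w = w ⬝ᵥ A *ᵥ v := by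
  rw [dotProduct_mulVec, ← mulVec_transpose, hA, dotProduct_comm]

section Derivatives

variable {𝕜 : Type*} [NontriviallyNormedField 𝕜] {m n : Type*} [Fintype n]
  {f g : 𝕜 → n → 𝕜} {f' g' : n → 𝕜} {x : 𝕜}

theorem HasDerivAt.dotProduct (hf : HasDerivAt f f' x) (hg : HasDerivAt g g' x) :
    HasDerivAt (fun y => f y ⬝ᵥ g y) (f' ⬝ᵥ g x + f x ⬝ᵥ g') x := by
  have hfi := hasDerivAt_pi.1 hf
  have hgi := hasDerivAt_pi.1 hg
  exact (HasDerivAt.fun_sum fun i _ => (hfi i).fun_mul (hgi i)).congr_deriv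
    Finset.sum_add_distrib

theorem HasDerivAt.mulVec (A : Matrix m n 𝕜) (hf : HasDerivAt f f' x) :
    HasDerivAt (fun y => A *ᵥ f y) (A *ᵥ f') x :=
  hasDerivAt_pi.2 fun i => ((hasDerivAt_const x (A i)).dotProduct hf).congr_deriv
    (by rw [zero_dotProduct, zero_add]; rfl)

theorem HasDerivAt.dotProduct_mulVec_self {A : Matrix n n 𝕜} (hA : A.IsSymm)
    (hf : HasDerivAt f f' x) :
    HasDerivAt (fun y => f y ⬝ᵥ A *ᵥ f y) (2 * (f x ⬝ᵥ A *ᵥ f')) x :=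
  (hf.dotProduct (hf.mulVec A)).congr_deriv (by rw [hA.dotProduct_mulVec_comm f']; ring)

end Derivatives

theorem cross_mulVec_cross_add_cross_mulVec_cross {R : Type*} [CommRing R]
    {A : Matrix (Fin 3) (Fin 3) R} (hA : A.IsSymm) (s v : Fin 3 → R) :
    crossProduct (A *ᵥ s) (crossProduct s v) + crossProduct s (crossProduct (A *ᵥ s) (A *ᵥ v)) =
      (s ⬝ᵥ A *ᵥ v) • (s + A *ᵥ s) - (s ⬝ᵥ A *ᵥ s) • (v + A *ᵥ v) := by
  rw [cross_cross_eq_smul_sub_smul', cross_cross_eq_smul_sub_smul', dotProduct_comm (A *ᵥ s) v,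
    hA.dotProduct_mulVec_comm s v, dotProduct_comm (A *ᵥ s) s]
  module

/-- For `S̃ = A·S` with `A` constant symmetric and `F = (1/2)⟨S, S̃⟩`, the
identity `S̃ × (S × S′) + S × (S̃ × S̃′) = F′·(S + S̃) − 2F·(S + S̃)′` holds:
the nonlocal term `M₀` of the deformed Heisenberg ferromagnet model is a total
`x`-derivative combination. -/
theorem ferromagnet_M0_total_derivative
    (A : Matrix (Fin 3) (Fin 3) ℝ) (hA : Aᵀ = A)
    (S St : ℝ → Fin 3 → ℝ) (F : ℝ → ℝ)
    (hS : Differentiable ℝ S)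
    (hSt : ∀ x : ℝ, St x = A.mulVec (S x))
    (hF : ∀ x : ℝ, F x = (1 / 2) * (S x ⬝ᵥ St x)) :
    ∀ x : ℝ,
      crossProduct (St x) (crossProduct (S x) (deriv S x)) +
          crossProduct (S x) (crossProduct (St x) (deriv St x)) =
        deriv F x • (S x + St x) - (2 * F x) • deriv (fun y => S y + St y) x := by
  intro x
  have hS' : HasDerivAt S (deriv S x) x := (hS x).hasDerivAt
  have hSt' : HasDerivAt St (A *ᵥ deriv S x) x := funext hSt ▸ hS'.mulVec A
  have hF' : HasDerivAt F (S x ⬝ᵥ A *ᵥ deriv S x) x := by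
    simp only [funext hF, hSt]
    exact ((hS'.dotProduct_mulVec_self hA).const_mul (1 / 2 : ℝ)).congr_deriv (by ring)
  rw [hF'.deriv, hSt'.deriv, (hS'.fun_add hSt').deriv, hF x, hSt x,
    cross_mulVec_cross_add_cross_mulVec_cross hA]
  congr 2
  ring
end
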